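/- arXiv:2603.27431 — 2 statements merged into one kernel-verified Lean document; each statement's English description precedes it below -/
import Mathlib

section
/- Let G = GL₂(𝔽₃). The center Z(G) has order 2, and every subgroup of G isomorphic to C₆ contains Z(G). -/
/-!
The center of `GL n R` is the group of scalar matrices, a copy of `Rˣ`; over `𝔽₃` this is
`{1, -1}`. A subgroup isomorphic to `C₆` contains an element `g` of order `6`, and in `GL₂(𝔽₃)`
the involution `g ^ 3` is forced to be `-1`: a non-central involution is diagonalizable with
eigenvalues `1, -1`, so its centralizer is a diagonal torus `𝔽₃ˣ × 𝔽₃ˣ` of exponent `2`, which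
contains no element of order `6`. In the proof this is a finite check over all `2 × 2` matrices
over `𝔽₃`.
-/

open Subgroup

namespace Matrix

lemma pow_three_eq_neg_one_of_pow_six_eq_one (A : Matrix (Fin 2) (Fin 2) (ZMod 3))
    (h6 : A ^ 6 = 1) (h2 : A ^ 2 ≠ 1) (h3 : A ^ 3 ≠ 1) : A ^ 3 = -1 := by
  revert A
  decide +kernel

namespace GeneralLinearGroup

variable {n : Type*} [Fintype n] [DecidableEq n]

lemma natCard_center [Nonempty n] {R : Type*} [CommRing R] :
    Nat.card (center (GL n R)) = Nat.card Rˣ := by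
  have hinj : Function.Injective (scalar n : Rˣ →* GL n R) := fun u v h => by
    simpa [Units.ext_iff] using congrArg Units.val h
  rw [center_eq_range_scalar]
  exact Nat.card_congr (MonoidHom.ofInjective hinj).toEquiv.symm

lemma center_zmod_three_eq_zpowers_neg_one : center (GL n (ZMod 3)) = zpowers (-1) := by
  have hunits : zpowers (-1 : (ZMod 3)ˣ) = ⊤ := by
    refine top_unique fun u _ => ?_
    obtain rfl | rfl : u = 1 ∨ u = -1 := (by decide : ∀ u : (ZMod 3)ˣ, u = 1 ∨ u = -1) u
    exacts [one_mem _, mem_zpowers _]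
  have hscalar : scalar n (-1 : (ZMod 3)ˣ) = -1 := by
    ext : 1
    simp only [coe_scalar, Units.val_neg, Units.val_one, map_neg, map_one]
  rw [center_eq_range_scalar, MonoidHom.range_eq_map, ← hunits, MonoidHom.map_zpowers, hscalar]

lemma pow_three_eq_neg_one_of_orderOf_eq_six {g : GL (Fin 2) (ZMod 3)} (hg : orderOf g = 6) :
    g ^ 3 = -1 := by
  have hpow {k : ℕ} (hk : g ^ k ≠ 1) : (g : Matrix (Fin 2) (Fin 2) (ZMod 3)) ^ k ≠ 1 := by
    rwa [← Units.val_pow_eq_pow_val, Ne, Units.val_eq_one]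
  refine Units.ext (pow_three_eq_neg_one_of_pow_six_eq_one _ ?_ ?_ ?_)
  · rw [← Units.val_pow_eq_pow_val, ← hg, pow_orderOf_eq_one, Units.val_one]
  · exact hpow (pow_ne_one_of_lt_orderOf (by norm_num) (by omega))
  · exact hpow (pow_ne_one_of_lt_orderOf (by norm_num) (by omega))

end GeneralLinearGroup

end Matrix

lemma Subgroup.exists_orderOf_eq_of_mulEquiv_multiplicative_zmod {G : Type*} [Group G]
    {H : Subgroup G} {n : ℕ} (e : H ≃* Multiplicative (ZMod n)) : ∃ g ∈ H, orderOf g = n := by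
  refine ⟨e.symm (.ofAdd 1), (e.symm _).2, ?_⟩
  rw [Subgroup.orderOf_coe, MulEquiv.orderOf_eq, orderOf_ofAdd_eq_addOrderOf, ZMod.addOrderOf_one]

/-- In GL₂(𝔽₃), the center has order 2 and every subgroup isomorphic to C₆
contains the center. -/
theorem GL2F3_center_card_and_le_C6 :
    Nat.card (Subgroup.center (GL (Fin 2) (ZMod 3))) = 2 ∧
      ∀ H : Subgroup (GL (Fin 2) (ZMod 3)),
        Nonempty (H ≃* Multiplicative (ZMod 6)) →
          Subgroup.center (GL (Fin 2) (ZMod 3)) ≤ H := by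
  refine ⟨?_, fun H ⟨e⟩ => ?_⟩
  · rw [Matrix.GeneralLinearGroup.natCard_center, Nat.card_eq_fintype_card, ZMod.card_units]
  · obtain ⟨g, hgH, hg⟩ := exists_orderOf_eq_of_mulEquiv_multiplicative_zmod e
    rw [Matrix.GeneralLinearGroup.center_zmod_three_eq_zpowers_neg_one, zpowers_le,
      ← Matrix.GeneralLinearGroup.pow_three_eq_neg_one_of_orderOf_eq_six hg]
    exact H.pow_mem hgH 3
end

section
/- Let G be a finite group acting on a smooth projective curve X, let L ≤ H ∩ N for subgroups H, N ≤ G, and suppose that for all p, q ∈ X the divisors D_{L,p} := Σ_{l∈L} [l·p] and D_{L,q} are linearly equivalent. If |H| = |N|, then D_{H,p} := Σ_{h∈H} [h·p] and D_{N,p} := Σ_{n∈N} [n·p] are linearly equivalent for every p ∈ X. -/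
/-- An abstract interface for a smooth projective curve over an algebraically
closed field, packaging its points, divisors (elements of the free abelian
group on points, encoded as finitely supported functions), degree, genus,
linear equivalence, the dimension `ℓ` of Riemann–Roch spaces, a canonical
divisor, and very ampleness, together with their standard properties. -/
structure SmoothProjectiveCurve where
  Point : Type
  genus : ℕ
  /-- linear equivalence of divisors -/
  linEquiv : (Point →₀ ℤ) → (Point →₀ ℤ) → Prop
  /-- `ℓ(D) = dim H⁰(X, O_X(D))` -/
  l : (Point →₀ ℤ) → ℕ
  /-- a canonical divisor -/
  K : Point →₀ ℤ
  veryAmple : (Point →₀ ℤ) → Prop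
  deg : (Point →₀ ℤ) →+ ℤ
  deg_single : ∀ p : Point, deg (Finsupp.single p 1) = 1
  linEquiv_refl : ∀ D, linEquiv D D
  linEquiv_symm : ∀ {D E}, linEquiv D E → linEquiv E D
  linEquiv_trans : ∀ {D E F}, linEquiv D E → linEquiv E F → linEquiv D F
  linEquiv_add : ∀ {D E D' E'}, linEquiv D E → linEquiv D' E' →
    linEquiv (D + D') (E + E')
  linEquiv_neg : ∀ {D E}, linEquiv D E → linEquiv (-D) (-E)
  deg_congr : ∀ {D E}, linEquiv D E → deg D = deg E
  l_congr : ∀ {D E}, linEquiv D E → l D = l E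
  riemannRoch : ∀ D, (l D : ℤ) - l (K - D) = deg D + 1 - genus
  deg_K : deg K = 2 * (genus : ℤ) - 2
  l_eq_zero_of_deg_neg : ∀ D, deg D < 0 → l D = 0
  l_le_one_of_deg_zero : ∀ D, deg D = 0 → l D ≤ 1
  l_eq_one_iff_of_deg_zero : ∀ D, deg D = 0 → (l D = 1 ↔ linEquiv D 0)
  veryAmple_of_degree : ∀ D, (2 * (genus : ℤ) + 1) ≤ deg D → veryAmple D


private lemma SPC.linEquiv_sum_finset (C : SmoothProjectiveCurve) {ι : Type*}
    [DecidableEq ι] (s : Finset ι) (D E : ι → (C.Point →₀ ℤ))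
    (h : ∀ i ∈ s, C.linEquiv (D i) (E i)) :
    C.linEquiv (∑ i ∈ s, D i) (∑ i ∈ s, E i) := by
  induction s using Finset.induction with
  | empty => simpa using C.linEquiv_refl 0
  | insert _ _ hx ih =>
    rw [Finset.sum_insert hx, Finset.sum_insert hx]
    exact C.linEquiv_add (h _ (Finset.mem_insert_self _ _))
      (ih fun i hi => h i (Finset.mem_insert_of_mem hi))

private lemma SPC.linEquiv_sum (C : SmoothProjectiveCurve) {ι : Type*} [Fintype ι]
    (D E : ι → (C.Point →₀ ℤ)) (h : ∀ i, C.linEquiv (D i) (E i)) :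
    C.linEquiv (∑ i, D i) (∑ i, E i) := by
  classical
  exact SPC.linEquiv_sum_finset C Finset.univ D E fun i _ => h i

private lemma SPC.key (C : SmoothProjectiveCurve) {G : Type*} [Group G] [Fintype G]
    [MulAction G C.Point] (L M : Subgroup G) [Fintype L] [Fintype M]
    (hLM : L ≤ M) (p : C.Point)
    (hLe : ∀ q : C.Point,
      C.linEquiv (∑ l : L, Finsupp.single ((l : G) • q) (1 : ℤ))
        (∑ l : L, Finsupp.single ((l : G) • p) (1 : ℤ))) :
    C.linEquiv (∑ m : M, Finsupp.single ((m : G) • p) (1 : ℤ))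
      ((Nat.card M / Nat.card L) •
        ∑ l : L, Finsupp.single ((l : G) • p) (1 : ℤ)) := by
  classical
  set s : Subgroup M := L.subgroupOf M with hs
  have : Fintype (M ⧸ s) := Fintype.ofFinite _
  -- inclusion of L into M
  have hincl : ∀ l : L, (l : G) ∈ M := fun l => hLM l.2
  -- step 1: reindex by inversion
  have h1 : (∑ m : M, Finsupp.single ((m : G) • p) (1 : ℤ))
      = ∑ m : M, Finsupp.single (((m : M)⁻¹ : M) • p) (1 : ℤ) := by
    exact (Fintype.sum_equiv (Equiv.inv M) _ _ (fun m => rfl)).symm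
  -- step 2: fiberwise sum over the quotient
  have h2 : (∑ m : M, Finsupp.single (((m : M)⁻¹ : M) • p) (1 : ℤ))
      = ∑ q : M ⧸ s, ∑ m : {m : M // (QuotientGroup.mk m : M ⧸ s) = q},
          Finsupp.single ((((m : M))⁻¹ : M) • p) (1 : ℤ) := by
    exact (Fintype.sum_fiberwise _ _).symm
  -- step 3: each fiber sum is an L-divisor
  have h3 : ∀ q : M ⧸ s,
      (∑ m : {m : M // (QuotientGroup.mk m : M ⧸ s) = q},
          Finsupp.single ((((m : M))⁻¹ : M) • p) (1 : ℤ))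
      = ∑ l : L, Finsupp.single ((l : G) • (((Quotient.out q : M) : G)⁻¹ • p)) (1 : ℤ) := by
    intro q
    let e : L ≃ {m : M // (QuotientGroup.mk m : M ⧸ s) = q} :=
    { toFun := fun l => ⟨(Quotient.out q) * (⟨(l : G), hincl l⟩ : M)⁻¹, by
        rw [QuotientGroup.mk_mul_of_mem]
        · exact Quotient.out_eq' q
        · exact Subgroup.mem_subgroupOf.2 (by simpa using L.inv_mem l.2)⟩
      invFun := fun m => ⟨(((m : M)⁻¹ * Quotient.out q : M) : G), by
        have hm : ((m : M)⁻¹ * Quotient.out q) ∈ s := by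
          rw [← QuotientGroup.eq]
          rw [m.2]
          exact (Quotient.out_eq' q).symm
        exact Subgroup.mem_subgroupOf.1 hm⟩
      left_inv := fun l => by
        ext
        simp [mul_assoc]
      right_inv := fun m => by
        ext
        simp }
    refine (Fintype.sum_equiv e _ _ fun l => ?_).symm
    congr 1
    show (l : G) • (((Quotient.out q : M) : G)⁻¹ • p)
        = (((Quotient.out q) * (⟨(l : G), hincl l⟩ : M)⁻¹)⁻¹ : M) • p
    have h4 : (((Quotient.out q) * (⟨(l : G), hincl l⟩ : M)⁻¹)⁻¹ : M)
        = (⟨(l : G), hincl l⟩ : M) * (Quotient.out q)⁻¹ := by group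
    rw [h4]
    show _ = (((⟨(l : G), hincl l⟩ : M) * (Quotient.out q)⁻¹ : M) : G) • p
    rw [Subgroup.coe_mul, mul_smul]
    rfl
  -- cardinality
  have hcardL : Nat.card s = Nat.card L := by
    exact Nat.card_congr (Subgroup.subgroupOfEquivOfLe hLM).toEquiv
  have hLpos : 0 < Nat.card L := Nat.card_pos
  have hlag : Nat.card M = Nat.card (M ⧸ s) * Nat.card L := by
    rw [← hcardL]
    exact Subgroup.card_eq_card_quotient_mul_card_subgroup s
  have hdiv : Nat.card M / Nat.card L = Nat.card (M ⧸ s) := by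
    rw [hlag, Nat.mul_div_cancel _ hLpos]
  rw [h1, h2, hdiv]
  have : C.linEquiv
      (∑ q : M ⧸ s, ∑ m : {m : M // (QuotientGroup.mk m : M ⧸ s) = q},
          Finsupp.single ((((m : M))⁻¹ : M) • p) (1 : ℤ))
      (∑ _q : M ⧸ s, ∑ l : L, Finsupp.single ((l : G) • p) (1 : ℤ)) := by
    refine SPC.linEquiv_sum C _ _ fun q => ?_
    rw [h3 q]
    exact hLe _
  refine C.linEquiv_trans this ?_
  rw [Finset.sum_const, Finset.card_univ, Nat.card_eq_fintype_card]
  exact C.linEquiv_refl _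

/-- Let G be a finite group acting on a smooth projective curve X, and let
L ≤ H ⊓ N with D_{L,p} ~ D_{L,q} for all p, q.  If |H| = |N| then
D_{H,p} ~ D_{N,p} for every p. -/
theorem orbit_divisors_linEquiv_of_card_eq (C : SmoothProjectiveCurve)
    (G : Type*) [Group G] [Fintype G] [MulAction G C.Point]
    (H N L : Subgroup G) [Fintype H] [Fintype N] [Fintype L]
    (hL : L ≤ H ⊓ N)
    (hLequiv : ∀ p q : C.Point,
      C.linEquiv (∑ l : L, Finsupp.single ((l : G) • p) (1 : ℤ))
        (∑ l : L, Finsupp.single ((l : G) • q) (1 : ℤ)))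
    (hcard : Nat.card H = Nat.card N) :
    ∀ p : C.Point,
      C.linEquiv (∑ h : H, Finsupp.single ((h : G) • p) (1 : ℤ))
        (∑ n : N, Finsupp.single ((n : G) • p) (1 : ℤ)) := by
  intro p
  have hLe : ∀ q : C.Point,
      C.linEquiv (∑ l : L, Finsupp.single ((l : G) • q) (1 : ℤ))
        (∑ l : L, Finsupp.single ((l : G) • p) (1 : ℤ)) := fun q => hLequiv q p
  have hH := SPC.key C L H (hL.trans inf_le_left) p hLe
  have hN := SPC.key C L N (hL.trans inf_le_right) p hLe
  rw [hcard] at hH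
  exact C.linEquiv_trans hH (C.linEquiv_symm hN)
end
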